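/- Let τ₁, τ₂ be complex numbers in the upper half-plane and let Z = diag(τ₁, τ₂), a symmetric 2×2 complex matrix with positive definite imaginary part (the normalized period matrix of a product of two elliptic curves). Then the genus-2 Riemann theta function vanishes at the 2-torsion point O = ((1+τ₁)/2, (1+τ₂)/2) ∈ ℂ²: θ(O; Z) = 0. Moreover O = (1/2)Z·a + (1/2)b with a = (1,1) and b = (1,1), and ᵗa·b = 2 is even, so O is an even 2-torsion point; hence an even Thetanullwert of Z vanishes. -/
import Mathlib

set_option maxHeartbeats 1000000


open scoped Matrix

open Complex Real

/-- The Riemann theta function attached to a `g × g` complex matrix `Z`. -/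
noncomputable def riemannTheta {g : ℕ} (Z : Matrix (Fin g) (Fin g) ℂ)
    (z : Fin g → ℂ) : ℂ :=
  ∑' n : Fin g → ℤ,
    Complex.exp ((Real.pi : ℂ) * Complex.I * (∑ j, ∑ k, (n j : ℂ) * Z j k * (n k : ℂ)) +
      2 * (Real.pi : ℂ) * Complex.I * (∑ j, (n j : ℂ) * z j))

/-- The genus-1 theta term, written in our normalization. -/
noncomputable def thTerm (τ : ℂ) (n : ℤ) : ℂ :=
  Complex.exp ((Real.pi : ℂ) * Complex.I * ((n : ℂ) * τ * n) +
    2 * (Real.pi : ℂ) * Complex.I * ((n : ℂ) * ((1 + τ) / 2)))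

lemma thTerm_eq_jacobi (τ : ℂ) (n : ℤ) :
    thTerm τ n = jacobiTheta₂_term n ((1 + τ) / 2) τ := by
  rw [thTerm, jacobiTheta₂_term]
  ring_nf

lemma summable_thTerm {τ : ℂ} (hτ : 0 < τ.im) : Summable (thTerm τ) := by
  simp only [funext fun n => thTerm_eq_jacobi τ n]
  exact (summable_jacobiTheta₂_term_iff _ τ).2 hτ

lemma thTerm_neg (τ : ℂ) (n : ℤ) : thTerm τ (-1 - n) = -thTerm τ n := by
  have h1 : Complex.exp ((Real.pi : ℂ) * Complex.I) = -1 := Complex.exp_pi_mul_I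
  have h2 : Complex.exp ((-(n : ℂ) - 1) * (2 * (Real.pi : ℂ) * Complex.I)) = 1 := by
    have := Complex.exp_int_mul_two_pi_mul_I (-n - 1)
    simpa [Complex.ext_iff, mul_comm, mul_assoc, mul_left_comm, sub_mul, neg_mul] using this
  have key : thTerm τ (-1 - n) = thTerm τ n *
      Complex.exp ((-(n : ℂ) - 1) * (2 * (Real.pi : ℂ) * Complex.I)) *
      Complex.exp ((Real.pi : ℂ) * Complex.I) := by
    rw [thTerm, thTerm, ← Complex.exp_add, ← Complex.exp_add]
    push_cast
    ring_nf
  rw [key, h2, h1]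
  ring

lemma tsum_thTerm_eq_zero {τ : ℂ} (_hτ : 0 < τ.im) : ∑' n : ℤ, thTerm τ n = 0 := by
  have h1 := (Equiv.subLeft (-1 : ℤ)).tsum_eq (thTerm τ)
  simp only [Equiv.subLeft_apply, thTerm_neg, tsum_neg] at h1
  linear_combination (-1 / 2 : ℂ) * h1

theorem riemannTheta_product_even_thetanullwert_eq_zero (τ₁ τ₂ : ℂ)
    (hτ₁ : 0 < τ₁.im) (hτ₂ : 0 < τ₂.im) :
    let Z : Matrix (Fin 2) (Fin 2) ℂ := Matrix.diagonal ![τ₁, τ₂]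
    let a : Fin 2 → ℤ := fun _ => 1
    let b : Fin 2 → ℤ := fun _ => 1
    let O : Fin 2 → ℂ := ![(1 + τ₁) / 2, (1 + τ₂) / 2]
    riemannTheta Z O = 0 ∧
      O = (1 / 2 : ℂ) • (Z *ᵥ (fun j => (a j : ℂ))) + (1 / 2 : ℂ) • (fun j => (b j : ℂ)) ∧
      (∑ j, a j * b j) = 2 ∧ Even (∑ j, a j * b j) := by
  intro Z a b O
  refine ⟨?_, ?_, ?_, ?_⟩
  · -- the theta value vanishes
    have hsummand : ∀ n : Fin 2 → ℤ,
        Complex.exp ((Real.pi : ℂ) * Complex.I * (∑ j, ∑ k, (n j : ℂ) * Z j k * (n k : ℂ)) +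
          2 * (Real.pi : ℂ) * Complex.I * (∑ j, (n j : ℂ) * O j)) =
        thTerm τ₁ (n 0) * thTerm τ₂ (n 1) := by
      intro n
      rw [thTerm, thTerm, ← Complex.exp_add]
      congr 1
      simp [Z, O, Fin.sum_univ_two, Matrix.diagonal]
      ring
    rw [riemannTheta]
    simp only [hsummand]
    have hs₁ := summable_thTerm hτ₁
    have hs₂ := summable_thTerm hτ₂
    have hsum : Summable (fun p : ℤ × ℤ => thTerm τ₁ p.1 * thTerm τ₂ p.2) :=
      summable_mul_of_summable_norm hs₁.norm hs₂.norm
    have heq := (piFinTwoEquiv fun _ => ℤ).symm.tsum_eq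
        (fun n : Fin 2 → ℤ => thTerm τ₁ (n 0) * thTerm τ₂ (n 1))
    simp only [piFinTwoEquiv_symm_apply, Matrix.cons_val_zero, Matrix.cons_val_one,
      Matrix.head_cons, Fin.cons_zero, Fin.cons_one] at heq
    have h₁ : ∀ m : ℤ, Summable (fun k : ℤ => thTerm τ₁ m * thTerm τ₂ k) :=
      fun m => hs₂.mul_left (thTerm τ₁ m)
    have hfub : ∑' p : ℤ × ℤ, thTerm τ₁ p.1 * thTerm τ₂ p.2 =
        ∑' (m : ℤ) (k : ℤ), thTerm τ₁ m * thTerm τ₂ k := Summable.tsum_prod' hsum h₁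
    rw [← heq, hfub]
    simp only [tsum_mul_left, tsum_thTerm_eq_zero hτ₂, mul_zero, tsum_zero]
  · funext i
    fin_cases i <;>
      simp [Z, a, b, O, Matrix.mulVec, Matrix.diagonal, Fin.sum_univ_two, Pi.add_apply] <;>
      ring_nf
  · simp [a, b, Fin.sum_univ_two]
  · simp [a, b, Fin.sum_univ_two]
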